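/- Let λ ∈ ℂ with |λ| > 1, let G = diag(λ, λ⁻¹), and let N = [[a′, b′], [c′, d′]] be a 2×2 complex matrix with det N = 1 and a′ ≠ 0. For each natural number n let r_n denote the spectral radius of the matrix N · Gⁿ. Then r_n / |λ|ⁿ converges to |a′| as n → ∞; consequently there exists a constant C > 0 such that for all n ≥ 1 one has 2·log r_n ≥ 2·n·log|λ| − C. -/

import Mathlib

/-! The eigenvalues of a determinant-one `2 × 2` matrix have product `1` and sum equal to the
trace, so the spectral radius differs from `‖trace‖` by at most the smaller eigenvalue modulus,
which is `≤ 1`. For `N * Gⁿ` the trace is `a' λⁿ + d' λ⁻ⁿ`, whose modulus divided by `‖λ‖ⁿ`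
tends to `‖a'‖`, hence so does `rₙ / ‖λ‖ⁿ`. As `rₙ ≥ 1` and the limit is positive, `rₙ / ‖λ‖ⁿ`
is bounded below by some `c > 0`, and taking logarithms gives the lower bound. -/

open Matrix Filter

/-- The spectral radius of a 2×2 complex matrix: the maximum of `|μ|` over the
elements `μ` of its spectrum (equivalently, the roots of its characteristic polynomial). -/
noncomputable def specRad (M : Matrix (Fin 2) (Fin 2) ℂ) : ℝ :=
  (spectralRadius ℂ M).toReal

open Topology

namespace Matrix

theorem mem_spectrum_fin_two_iff {K : Type*} [Field K] (M : Matrix (Fin 2) (Fin 2) K) (μ : K) :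
    μ ∈ spectrum K M ↔ μ ^ 2 - M.trace * μ + M.det = 0 := by
  simp [mem_spectrum_iff_isRoot_charpoly, charpoly_fin_two]

theorem exists_spectrum_fin_two_eq_pair {K : Type*} [Field K] [IsAlgClosed K]
    (M : Matrix (Fin 2) (Fin 2) K) :
    ∃ μ₁ μ₂ : K, μ₁ + μ₂ = M.trace ∧ μ₁ * μ₂ = M.det ∧ spectrum K M = {μ₁, μ₂} := by
  obtain ⟨μ₁, hμ₁⟩ := spectrum.nonempty_of_isAlgClosed_of_finiteDimensional K M
  rw [mem_spectrum_fin_two_iff] at hμ₁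
  refine ⟨μ₁, M.trace - μ₁, add_sub_cancel _ _, by linear_combination -hμ₁, ?_⟩
  ext μ
  have hfactor : μ ^ 2 - M.trace * μ + M.det = (μ - μ₁) * (μ - (M.trace - μ₁)) := by
    linear_combination hμ₁
  rw [mem_spectrum_fin_two_iff, hfactor, mul_eq_zero, sub_eq_zero, sub_eq_zero]
  rfl

theorem trace_mul_diagonal_fin_two_pow {R : Type*} [CommRing R] (a b c d x y : R) (n : ℕ) :
    trace (!![a, b; c, d] * !![x, 0; 0, y] ^ n) = a * x ^ n + d * y ^ n := by
  have hdiag : !![x, 0; 0, y] = diagonal ![x, y] := by simp [diagonal_fin_two]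
  rw [hdiag, diagonal_pow, trace_fin_two, mul_diagonal, mul_diagonal]
  simp

end Matrix

theorem abs_max_norm_sub_norm_add_le_min {E : Type*} [SeminormedAddCommGroup E] (x y : E) :
    |max ‖x‖ ‖y‖ - ‖x + y‖| ≤ min ‖x‖ ‖y‖ := by
  have hlow : |‖x‖ - ‖y‖| ≤ ‖x + y‖ := by
    simpa using abs_norm_sub_norm_le x (-y)
  rw [abs_le]
  constructor
  · linarith [norm_add_le x y, min_add_max ‖x‖ ‖y‖]
  · linarith [max_sub_min_eq_abs' ‖x‖ ‖y‖]

theorem min_le_one_le_max_of_mul_eq_one {a b : ℝ} (ha : 0 ≤ a) (h : a * b = 1) :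
    min a b ≤ 1 ∧ 1 ≤ max a b := by
  rcases le_total a b with hab | hab
  · simp only [min_eq_left hab, max_eq_right hab]; constructor <;> nlinarith
  · simp only [min_eq_right hab, max_eq_left hab]; constructor <;> nlinarith

theorem specRad_eq_max_norm {M : Matrix (Fin 2) (Fin 2) ℂ} {μ₁ μ₂ : ℂ}
    (h : spectrum ℂ M = {μ₁, μ₂}) : specRad M = max ‖μ₁‖ ‖μ₂‖ := by
  rw [specRad, spectralRadius, h, iSup_insert, iSup_singleton, ← ENNReal.coe_max,
    ENNReal.coe_toReal, NNReal.coe_max, coe_nnnorm, coe_nnnorm]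

theorem one_le_specRad_and_abs_sub_norm_trace_le_one {M : Matrix (Fin 2) (Fin 2) ℂ}
    (hdet : M.det = 1) : 1 ≤ specRad M ∧ |specRad M - ‖M.trace‖| ≤ 1 := by
  obtain ⟨μ₁, μ₂, htr, hprod, hspec⟩ := M.exists_spectrum_fin_two_eq_pair
  have hnorm := min_le_one_le_max_of_mul_eq_one (norm_nonneg μ₁)
    (by rw [← norm_mul, hprod, hdet, norm_one])
  rw [specRad_eq_max_norm hspec, ← htr]
  exact ⟨hnorm.2, (abs_max_norm_sub_norm_add_le_min μ₁ μ₂).trans hnorm.1⟩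

theorem tendsto_norm_mul_pow_add_mul_inv_pow_div {𝕜 : Type*} [NormedField 𝕜] {l : 𝕜}
    (hl : 1 < ‖l‖) (a d : 𝕜) :
    Tendsto (fun n : ℕ => ‖a * l ^ n + d * l⁻¹ ^ n‖ / ‖l‖ ^ n) atTop (𝓝 ‖a‖) := by
  have hl0 : l ≠ 0 := norm_pos_iff.1 (one_pos.trans hl)
  have hsmall : Tendsto (fun n : ℕ => (l⁻¹ * l⁻¹) ^ n) atTop (𝓝 0) :=
    tendsto_pow_atTop_nhds_zero_of_norm_lt_one <| by
      rw [norm_mul, norm_inv]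
      nlinarith [inv_lt_one_of_one_lt₀ hl, inv_pos.2 (one_pos.trans hl)]
  have hlim := ((tendsto_const_nhds (x := a)).add (hsmall.const_mul d)).norm
  rw [mul_zero, add_zero] at hlim
  refine hlim.congr fun n => ?_
  rw [← norm_pow, ← norm_div, mul_pow, ← mul_assoc, add_div, mul_div_assoc,
    div_self (pow_ne_zero _ hl0), mul_one, div_eq_mul_inv, ← inv_pow]

theorem tendsto_div_of_abs_sub_le {u v w : ℕ → ℝ} {B L : ℝ} (h : ∀ n, |u n - v n| ≤ B)
    (hw : Tendsto w atTop atTop) (hv : Tendsto (fun n => v n / w n) atTop (𝓝 L)) :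
    Tendsto (fun n => u n / w n) atTop (𝓝 L) := by
  have herr : Tendsto (fun n => (u n - v n) / w n) atTop (𝓝 0) :=
    tendsto_bdd_div_atTop_nhds_zero (.of_forall fun n => (abs_le.1 (h n)).1)
      (.of_forall fun n => (abs_le.1 (h n)).2) hw
  simpa [sub_div] using hv.add herr

theorem exists_pos_forall_le_of_tendsto {f : ℕ → ℝ} {L : ℝ} (hf : ∀ n, 0 < f n)
    (h : Tendsto f atTop (𝓝 L)) (hL : 0 < L) : ∃ c, 0 < c ∧ ∀ n, c ≤ f n := by
  obtain ⟨N, hN⟩ := eventually_atTop.1 (h.eventually (eventually_gt_nhds (half_lt_self hL)))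
  obtain ⟨m, -, hm⟩ := (Finset.range (N + 1)).exists_min_image f ⟨0, by simp⟩
  refine ⟨min (L / 2) (f m), lt_min (half_pos hL) (hf m), fun n => ?_⟩
  rcases lt_or_ge n N with hn | hn
  · exact (min_le_right _ _).trans (hm n (Finset.mem_range.2 (by omega)))
  · exact (min_le_left _ _).trans (hN n hn).le

/-- With `G = diag(λ, λ⁻¹)`, `|λ| > 1`, `det N = 1` and `a' ≠ 0`,
the spectral radius `r_n` of `N · Gⁿ` satisfies `r_n / |λ|ⁿ → |a'|`; consequently
there is `C > 0` with `2·log r_n ≥ 2·n·log|λ| − C` for all `n ≥ 1`. -/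
theorem specRad_mul_pow_tendsto_and_log_lower_bound
    (l a' b' c' d' : ℂ) (hl : 1 < ‖l‖)
    (G N : Matrix (Fin 2) (Fin 2) ℂ)
    (hG : G = !![l, 0; 0, l⁻¹])
    (hN : N = !![a', b'; c', d'])
    (hdetN : N.det = 1)
    (ha' : a' ≠ 0)
    (r : ℕ → ℝ)
    (hr : ∀ n : ℕ, r n = specRad (N * G ^ n)) :
    Tendsto (fun n : ℕ => r n / ‖l‖ ^ n) atTop (nhds ‖a'‖) ∧
    ∃ C : ℝ, 0 < C ∧ ∀ n : ℕ, 1 ≤ n →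
      2 * Real.log (r n) ≥ 2 * (n : ℝ) * Real.log ‖l‖ - C := by
  have hl0 : l ≠ 0 := norm_pos_iff.1 (one_pos.trans hl)
  have hdet (n : ℕ) : (N * G ^ n).det = 1 := by
    simp [hdetN, hG, det_fin_two_of, hl0]
  have htr (n : ℕ) : (N * G ^ n).trace = a' * l ^ n + d' * l⁻¹ ^ n := by
    rw [hN, hG, trace_mul_diagonal_fin_two_pow]
  have hbounds (n : ℕ) := one_le_specRad_and_abs_sub_norm_trace_le_one (hdet n)
  have hlim : Tendsto (fun n : ℕ => r n / ‖l‖ ^ n) atTop (𝓝 ‖a'‖) :=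
    tendsto_div_of_abs_sub_le (fun n => by simpa [hr, htr] using (hbounds n).2)
      (tendsto_pow_atTop_atTop_of_one_lt hl) (tendsto_norm_mul_pow_add_mul_inv_pow_div hl a' d')
  refine ⟨hlim, ?_⟩
  have hpow (n : ℕ) : 0 < ‖l‖ ^ n := pow_pos (one_pos.trans hl) n
  obtain ⟨c, hc, hcr⟩ := exists_pos_forall_le_of_tendsto
    (fun n => div_pos (by linarith [hr n ▸ (hbounds n).1]) (hpow n)) hlim (norm_pos_iff.2 ha')
  refine ⟨2 * |Real.log c| + 1, by positivity, fun n _ => ?_⟩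
  have hlog : Real.log c + n * Real.log ‖l‖ ≤ Real.log (r n) := by
    rw [← Real.log_pow, ← Real.log_mul hc.ne' (hpow n).ne']
    exact Real.log_le_log (mul_pos hc (hpow n)) ((le_div_iff₀ (hpow n)).1 (hcr n))
  linarith [neg_abs_le (Real.log c)]
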